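/- arXiv:math/0007117 — 4 statements merged into one kernel-verified Lean document; each statement's English description precedes it below -/
import Mathlib

section
/- For every sequence a = (a_k) in l^2, the L^∞ norm of the Rademacher series Ta(t) = Σ_{k=1}^∞ a_k r_k(t) equals the l^1 norm of a, i.e. ‖Ta‖_{L^∞[0,1]} = Σ_{k=1}^∞ |a_k| (with the convention that both sides are infinite if a ∉ l^1). -/
open MeasureTheory

/-- The Rademacher functions `r_{k+1}(t) = sign (sin (2^k π t))` (0-indexed). -/
noncomputable def rademacher (k : ℕ) (t : ℝ) : ℝ :=
  Real.sign (Real.sin (2 ^ k * Real.pi * t))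

/-!
On a dyadic interval `I` of length `2⁻ⁿ` the functions `r_0, …, r_n` are constant, while the
reflection of `I` about its midpoint `c` changes the sign of every `r_k` with `k > n`. Hence
`x t + x (c - t) = 2 ∑_{k ≤ n} a_k r_k` for almost every `t ∈ I`, so `‖x‖_∞` dominates this
partial sum on `I`. Choosing `I` through the binary digits that align the signs of the `r_k`
with those of the `a_k` makes the partial sum `± ∑_{k ≤ n} |a_k|`; the reverse inequality is
`|r_k| ≤ 1`.
-/

open Real Set Finset

lemma Real.sign_sin_mul_pi_eq_neg_one_pow (q : ℕ) {s : ℝ} (hs : s ∈ Ioo (q : ℝ) (q + 1)) :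
    Real.sign (sin (s * π)) = (-1) ^ q := by
  have hpos : 0 < sin ((s - q) * π) :=
    sin_pos_of_pos_of_lt_pi (by nlinarith [hs.1, pi_pos]) (by nlinarith [hs.2, pi_pos])
  have hsplit : s * π = (s - q) * π + q * π := by ring
  rw [hsplit, sin_add_nat_mul_pi]
  rcases Nat.even_or_odd q with hq | hq
  · rw [hq.neg_one_pow, one_mul, Real.sign_of_pos hpos]
  · rw [hq.neg_one_pow, neg_one_mul, Real.sign_neg, Real.sign_of_pos hpos]

lemma abs_rademacher_le_one (k : ℕ) (t : ℝ) : |rademacher k t| ≤ 1 := by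
  rcases Real.sign_apply_eq (sin (2 ^ k * π * t)) with h | h | h <;>
    simp [rademacher, h]

def dyadicInterval (n m : ℕ) : Set ℝ := Ioo (m / 2 ^ n) ((m + 1) / 2 ^ n)

lemma rademacher_eq_neg_one_pow_of_mem_dyadicInterval {n m k : ℕ} (hk : k ≤ n) {t : ℝ}
    (ht : t ∈ dyadicInterval n m) : rademacher k t = (-1) ^ (m / 2 ^ (n - k)) := by
  set q := m / 2 ^ (n - k)
  have hpow : (2 : ℝ) ^ n = 2 ^ k * 2 ^ (n - k) := by rw [← pow_add, Nat.add_sub_cancel' hk]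
  have hq_le : (q : ℝ) * 2 ^ (n - k) ≤ m := by exact_mod_cast Nat.div_mul_le_self m _
  have hq_succ : m + 1 ≤ (q + 1) * 2 ^ (n - k) := by
    rw [add_mul, one_mul]; exact Nat.lt_div_mul_add (Nat.two_pow_pos _)
  have hq_succ' : (m : ℝ) + 1 ≤ (q + 1) * 2 ^ (n - k) := by exact_mod_cast hq_succ
  obtain ⟨h₁, h₂⟩ := ht
  rw [div_lt_iff₀ (by positivity), hpow] at h₁
  rw [lt_div_iff₀ (by positivity), hpow] at h₂
  have hmem : 2 ^ k * t ∈ Ioo (q : ℝ) (q + 1) := by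
    constructor <;> nlinarith [pow_pos (two_pos (α := ℝ)) (n - k)]
  rw [rademacher, ← Real.sign_sin_mul_pi_eq_neg_one_pow q hmem]
  ring_nf

lemma rademacher_div_two_pow_sub {n k : ℕ} (hk : n < k) (j : ℕ) (t : ℝ) :
    rademacher k (j / 2 ^ n - t) = -rademacher k t := by
  have hpow : (2 : ℝ) ^ k = 2 * 2 ^ (k - n - 1) * 2 ^ n := by
    rw [← pow_succ', ← pow_add]; congr 1; omega
  have harg : 2 ^ k * π * (j / 2 ^ n - t) =
      (j * 2 ^ (k - n - 1) : ℕ) * (2 * π) - 2 ^ k * π * t := by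
    rw [hpow]; push_cast; field_simp
  rw [rademacher, rademacher, harg, sin_nat_mul_two_pi_sub, Real.sign_neg]

lemma sub_mem_dyadicInterval {n m : ℕ} {t : ℝ} (ht : t ∈ dyadicInterval n m) :
    ((2 * m + 1 : ℕ) : ℝ) / 2 ^ n - t ∈ dyadicInterval n m := by
  obtain ⟨h₁, h₂⟩ := ht
  constructor
  · push_cast; rw [← sub_pos] at h₂ ⊢; convert h₂ using 1; ring
  · push_cast; rw [← sub_pos] at h₁ ⊢; convert h₁ using 1; ring

lemma dyadicInterval_subset_Icc {n m : ℕ} (hm : m < 2 ^ n) :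
    dyadicInterval n m ⊆ Icc 0 1 := by
  have hm' : (m : ℝ) + 1 ≤ 2 ^ n := by exact_mod_cast hm
  exact Ioo_subset_Icc_self.trans (Icc_subset_Icc (by positivity)
    ((div_le_one (by positivity)).2 hm'))

lemma volume_dyadicInterval_ne_zero (n m : ℕ) : volume (dyadicInterval n m) ≠ 0 := by
  rw [dyadicInterval, Real.volume_Ioo, ne_eq, ENNReal.ofReal_eq_zero, not_le, sub_pos]
  gcongr; linarith

lemma Nat.exists_lt_two_pow_testBit_iff (p : ℕ → Prop) (n : ℕ) :
    ∃ m < 2 ^ n, ∀ i < n, (m.testBit i ↔ p i) := by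
  classical
  refine ⟨∑ i ∈ (range n).filter p, 2 ^ i, Nat.geomSum_lt le_rfl fun i hi => ?_, fun i hi => ?_⟩
  · exact mem_range.1 (mem_filter.1 hi).1
  · rw [← Nat.mem_bitIndices, ← List.mem_toFinset, toFinset_bitIndices_sum_two_pow]
    simp [hi]

lemma neg_one_pow_div_two_pow_eq_of_testBit_iff {R : Type*} [Monoid R] [HasDistribNeg R]
    {m i : ℕ} {P : Prop} [Decidable P] (h : m.testBit i ↔ P) :
    (-1 : R) ^ (m / 2 ^ i) = if P then -1 else 1 := by
  rw [Nat.testBit_eq_decide_div_mod_eq, decide_eq_true_iff, ← Nat.odd_iff] at h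
  split_ifs with hP
  · exact (h.2 hP).neg_one_pow
  · exact (Nat.not_odd_iff_even.1 (mt h.1 hP)).neg_one_pow

lemma exists_abs_sum_mul_neg_one_pow_eq (a : ℕ → ℝ) (n : ℕ) :
    ∃ m < 2 ^ n, |∑ k ∈ range (n + 1), a k * (-1) ^ (m / 2 ^ (n - k))| =
      ∑ k ∈ range (n + 1), |a k| := by
  -- `r_0 = 1` on `(0, 1)` cannot be flipped, so the bits flip `r_k` exactly where the signs of
  -- `a_k` and `a_0` differ: then every term is `|a_k|` times the sign of `a_0`.
  obtain ⟨m, hm, hbits⟩ :=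
    Nat.exists_lt_two_pow_testBit_iff (fun i => Xor (a (n - i) < 0) (a 0 < 0)) n
  have hterm : ∀ k ∈ range (n + 1),
      a k * (-1) ^ (m / 2 ^ (n - k)) = (if a 0 < 0 then -1 else 1) * |a k| := by
    intro k hk
    have hsign : (-1 : ℝ) ^ (m / 2 ^ (n - k)) = if Xor (a k < 0) (a 0 < 0) then -1 else 1 := by
      rcases Nat.eq_zero_or_pos k with rfl | hk0
      · simp [Nat.div_eq_of_lt hm]
      · have hkn : k ≤ n := Nat.lt_succ_iff.1 (mem_range.1 hk)
        have := hbits (n - k) (by omega)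
        rw [Nat.sub_sub_self hkn] at this
        exact neg_one_pow_div_two_pow_eq_of_testBit_iff this
    rw [hsign]
    rcases lt_or_ge (a k) 0 with hk | hk <;> rcases lt_or_ge (a 0) 0 with h0 | h0 <;>
      simp [hk, h0, abs_of_neg, abs_of_nonneg, not_lt.2]
  refine ⟨m, hm, ?_⟩
  rw [sum_congr rfl hterm, ← mul_sum, abs_mul,
    abs_of_nonneg (sum_nonneg fun _ _ => abs_nonneg (α := ℝ) _)]
  split_ifs <;> simp

lemma hasSum_add_rademacher_sub {a : ℕ → ℝ} {n m : ℕ} {t : ℝ} (ht : t ∈ dyadicInterval n m) :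
    HasSum (fun k => a k * rademacher k t + a k * rademacher k ((2 * m + 1 : ℕ) / 2 ^ n - t))
      (2 * ∑ k ∈ range (n + 1), a k * (-1) ^ (m / 2 ^ (n - k))) := by
  convert hasSum_sum_of_ne_finset_zero (L := SummationFilter.unconditional ℕ)
    (s := range (n + 1)) ?_ using 1
  · rw [mul_sum]
    refine sum_congr rfl fun k hk => ?_
    have hkn : k ≤ n := Nat.lt_succ_iff.1 (mem_range.1 hk)
    rw [rademacher_eq_neg_one_pow_of_mem_dyadicInterval hkn ht,
      rademacher_eq_neg_one_pow_of_mem_dyadicInterval hkn (sub_mem_dyadicInterval ht)]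
    ring
  · intro k hk
    rw [rademacher_div_two_pow_sub (by simpa using hk)]
    ring

lemma measurePreserving_sub_restrict_dyadicInterval (n m : ℕ) :
    MeasurePreserving (fun t : ℝ => ((2 * m + 1 : ℕ) : ℝ) / 2 ^ n - t)
      (volume.restrict (dyadicInterval n m)) (volume.restrict (dyadicInterval n m)) := by
  have hpre : (fun t : ℝ => ((2 * m + 1 : ℕ) : ℝ) / 2 ^ n - t) ⁻¹' dyadicInterval n m =
      dyadicInterval n m := by
    ext t
    refine ⟨fun ht => ?_, sub_mem_dyadicInterval⟩
    simpa using sub_mem_dyadicInterval ht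
  have h := ((volume : Measure ℝ).measurePreserving_sub_left (((2 * m + 1 : ℕ) : ℝ) / 2 ^ n)
    ).restrict_preimage (s := dyadicInterval n m) measurableSet_Ioo
  rwa [hpre] at h

section

variable {a : ℕ → ℝ} {x : ℝ → ℝ}

lemma ofReal_abs_sum_le_eLpNorm_top
    (hx : ∀ᵐ t ∂(volume.restrict (Icc (0:ℝ) 1)), HasSum (fun k => a k * rademacher k t) (x t))
    {n m : ℕ} (hm : m < 2 ^ n) :
    ENNReal.ofReal |∑ k ∈ range (n + 1), a k * (-1) ^ (m / 2 ^ (n - k))| ≤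
      eLpNorm x ⊤ (volume.restrict (Icc (0:ℝ) 1)) := by
  set E := eLpNorm x ⊤ (volume.restrict (Icc (0:ℝ) 1))
  set S := ∑ k ∈ range (n + 1), a k * (-1) ^ (m / 2 ^ (n - k))
  set μ := volume.restrict (dyadicInterval n m)
  have hgood : ∀ᵐ t ∂μ, HasSum (fun k => a k * rademacher k t) (x t) ∧ ‖x t‖ₑ ≤ E := by
    refine ae_restrict_of_ae_restrict_of_subset (dyadicInterval_subset_Icc hm) ?_
    filter_upwards [hx, ae_le_eLpNormEssSup (f := x)] with t h₁ h₂
    exact ⟨h₁, h₂.trans_eq eLpNorm_exponent_top.symm⟩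
  have hreflected := (measurePreserving_sub_restrict_dyadicInterval n m).quasiMeasurePreserving.ae
    hgood
  have : (ae μ).NeBot := ae_neBot.2 (by simpa [μ] using volume_dyadicInterval_ne_zero n m)
  obtain ⟨t, ht, ⟨hsum, hxt⟩, ⟨hsum', hxt'⟩⟩ :=
    ((ae_restrict_mem (s := dyadicInterval n m) measurableSet_Ioo).and
      (hgood.and hreflected)).exists
  have hS : x t + x ((2 * m + 1 : ℕ) / 2 ^ n - t) = 2 * S :=
    (hsum.add hsum').unique (hasSum_add_rademacher_sub ht)
  rw [← Real.enorm_eq_ofReal_abs]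
  refine (ENNReal.mul_le_mul_iff_right two_ne_zero ENNReal.ofNat_ne_top).1 ?_
  calc 2 * ‖S‖ₑ = ‖x t + x ((2 * m + 1 : ℕ) / 2 ^ n - t)‖ₑ := by
        rw [hS, enorm_mul, Real.enorm_of_nonneg zero_le_two, ENNReal.ofReal_ofNat]
    _ ≤ ‖x t‖ₑ + ‖x ((2 * m + 1 : ℕ) / 2 ^ n - t)‖ₑ := enorm_add_le _ _
    _ ≤ 2 * E := (add_le_add hxt hxt').trans_eq (two_mul E).symm

lemma eLpNorm_top_le_tsum_ofReal_abs {μ : Measure ℝ}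
    (hx : ∀ᵐ t ∂μ, HasSum (fun k => a k * rademacher k t) (x t)) :
    eLpNorm x ⊤ μ ≤ ∑' k, ENNReal.ofReal |a k| := by
  rw [eLpNorm_exponent_top]
  refine eLpNormEssSup_le_of_ae_enorm_bound ?_
  filter_upwards [hx] with t ht
  rw [← ht.tsum_eq]
  refine enorm_tsum_le_tsum_enorm.trans (ENNReal.tsum_le_tsum fun k => ?_)
  rw [← Real.enorm_eq_ofReal_abs, enorm_mul]
  refine mul_le_of_le_one_right' ?_
  rw [Real.enorm_eq_ofReal_abs]
  exact ENNReal.ofReal_le_one.2 (abs_rademacher_le_one k t)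

end

theorem rademacher_sup_norm_eq_l1_general (a : ℕ → ℝ)
    (x : ℝ → ℝ)
    (hx : ∀ᵐ t ∂(volume.restrict (Set.Icc (0:ℝ) 1)),
      HasSum (fun k => a k * rademacher k t) (x t)) :
    eLpNorm x ⊤ (volume.restrict (Set.Icc (0:ℝ) 1)) = ∑' k, ENNReal.ofReal |a k| := by
  refine le_antisymm (eLpNorm_top_le_tsum_ofReal_abs hx) ?_
  rw [ENNReal.tsum_eq_iSup_nat]
  refine iSup_le fun n => ?_
  cases n with
  | zero => simp
  | succ n =>
    obtain ⟨m, hm, hsum⟩ := exists_abs_sum_mul_neg_one_pow_eq a n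
    rw [← ENNReal.ofReal_sum_of_nonneg fun _ _ => abs_nonneg _, ← hsum]
    exact ofReal_abs_sum_le_eLpNorm_top hx hm

/-- For `a ∈ ℓ²`, the `L^∞[0,1]` norm of `Ta = ∑ a_k r_k` equals the `ℓ¹` norm of `a`
(both sides being infinite if `a ∉ ℓ¹`). -/
theorem rademacher_sup_norm_eq_l1 (a : ℕ → ℝ) (ha : Summable fun k => (a k) ^ 2)
    (x : ℝ → ℝ)
    (hx : ∀ᵐ t ∂(volume.restrict (Set.Icc (0:ℝ) 1)),
      HasSum (fun k => a k * rademacher k t) (x t)) :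
    eLpNorm x ⊤ (volume.restrict (Set.Icc (0:ℝ) 1)) = ∑' k, ENNReal.ofReal |a k| :=
  rademacher_sup_norm_eq_l1_general a x hx
end

section
/- Let Q be the averaging operator Qx(t) = Σ_{k=1}^∞ (∫_{k-1}^k x(s)ds) χ_{(k-1,k]}(t). Then for every x ∈ L^1(0,∞) + L^∞(0,∞) and every positive integer t, K(t, Q(x*); L^1, L^∞) = K(t, x; L^1, L^∞). -/
open MeasureTheory
open scoped ENNReal

/-- Lebesgue measure on the half line `(0,∞)`. -/
noncomputable def halfLineMeasure : Measure ℝ := volume.restrict (Set.Ioi 0)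

/-- The nonincreasing rearrangement of `|x|` with respect to `halfLineMeasure`. -/
noncomputable def decRearr (x : ℝ → ℝ) (s : ℝ) : ℝ :=
  sInf {τ : ℝ | 0 ≤ τ ∧ halfLineMeasure {t | τ < |x t|} ≤ ENNReal.ofReal s}

/-- The averaging operator `Qx = ∑_k (∫_{k-1}^k x) χ_{(k-1,k]}` (0-indexed cells `(k,k+1]`). -/
noncomputable def Q (x : ℝ → ℝ) (t : ℝ) : ℝ :=
  ∑' k : ℕ, Set.indicator (Set.Ioc (k : ℝ) (k + 1))
    (fun _ => ∫ s in (k : ℝ)..(k + 1), x s) t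

/-- The Peetre K-functional for the couple `(L¹(0,∞), L^∞(0,∞))`. -/
noncomputable def K1inf (t : ℝ) (x : ℝ → ℝ) : ℝ≥0∞ :=
  ⨅ (y : ℝ → ℝ) (z : ℝ → ℝ) (_ : x = y + z),
    eLpNorm y 1 halfLineMeasure + ENNReal.ofReal t * eLpNorm z ⊤ halfLineMeasure

/-!
For `0 < t`, truncating at height `m` is an optimal decomposition, so
`K(t, w) = inf_{m ≥ 0} (∫ (|w| - m)₊ + t m)`. By the layer-cake formula this depends only on the
distribution function of `w`, which `x` and `x*` share. For a nonnegative function `f`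
nonincreasing on `(0, ∞)` the infimum is attained at `m = f t` and equals `∫_0^t f`; in
particular `K(t, x) = ∫_0^t x*`. Averaging over the cells `(k, k + 1]` keeps `x*` nonincreasing
and preserves its integral over `(0, n]`, so `K(n, Q x*) = ∫_0^n Q x* = ∫_0^n x* = K(n, x)`.
-/

open Set
open scoped NNReal

theorem ae_abs_le_toReal_eLpNorm_top {α : Type*} [MeasurableSpace α] {μ : Measure α}
    {z : α → ℝ} (hz : eLpNorm z ⊤ μ ≠ ⊤) :
    ∀ᵐ s ∂μ, |z s| ≤ (eLpNorm z ⊤ μ).toReal := by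
  filter_upwards [enorm_ae_le_eLpNormEssSup z μ] with s hs
  rw [← eLpNorm_exponent_top, Real.enorm_eq_ofReal_abs] at hs
  exact (ENNReal.ofReal_le_iff_le_toReal hz).1 hs

theorem K1inf_le_of_eq_add (t : ℝ) {w : ℝ → ℝ} (y z : ℝ → ℝ) (h : w = y + z) :
    K1inf t w ≤ eLpNorm y 1 halfLineMeasure + ENNReal.ofReal t * eLpNorm z ⊤ halfLineMeasure :=
  (iInf_le _ y).trans <| (iInf_le _ z).trans <| iInf_le _ h

theorem ofReal_abs_sub_max_neg_min (a : ℝ) {m : ℝ} (hm : 0 ≤ m) :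
    ENNReal.ofReal |a - max (-m) (min a m)| = ENNReal.ofReal (|a| - m) := by
  rcases le_total a (-m) with h | h
  · rw [min_eq_left (by linarith), max_eq_left h, abs_of_nonpos (by linarith),
      abs_of_nonpos (by linarith)]
    ring_nf
  rcases le_total a m with h' | h'
  · rw [min_eq_left h', max_eq_right h, sub_self, abs_zero, ENNReal.ofReal_zero,
      ENNReal.ofReal_of_nonpos (by linarith [abs_le.2 ⟨h, h'⟩])]
  · rw [min_eq_right h', max_eq_right (by linarith : -m ≤ m), abs_of_nonneg (by linarith),
      abs_of_nonneg (by linarith)]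

theorem K1inf_le_lintegral_sub_add (t : ℝ) (w : ℝ → ℝ) (m : ℝ≥0) :
    K1inf t w ≤ ∫⁻ s, ENNReal.ofReal (|w s| - m) ∂halfLineMeasure + ENNReal.ofReal t * m := by
  set z : ℝ → ℝ := fun s => max (-(m : ℝ)) (min (w s) m)
  refine (K1inf_le_of_eq_add t (w - z) z (sub_add_cancel w z).symm).trans (add_le_add ?_ ?_)
  · rw [eLpNorm_one_eq_lintegral_enorm]
    refine lintegral_mono fun s => le_of_eq ?_
    rw [Real.enorm_eq_ofReal_abs, Pi.sub_apply, ofReal_abs_sub_max_neg_min _ m.coe_nonneg]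
  · gcongr
    rw [eLpNorm_exponent_top, ← ENNReal.ofReal_coe_nnreal]
    refine eLpNormEssSup_le_of_ae_bound (ae_of_all _ fun s => ?_)
    rw [Real.norm_eq_abs, abs_le]
    exact ⟨le_max_left _ _, max_le (by linarith [m.coe_nonneg]) (min_le_right _ _)⟩

theorem iInf_lintegral_sub_add_le_K1inf {t : ℝ} (ht : 0 < t) (w : ℝ → ℝ) :
    ⨅ m : ℝ≥0, (∫⁻ s, ENNReal.ofReal (|w s| - m) ∂halfLineMeasure + ENNReal.ofReal t * m)
      ≤ K1inf t w := by
  refine le_iInf fun y => le_iInf fun z => le_iInf fun hw => ?_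
  obtain hz | hz := eq_top_or_lt_top (eLpNorm z ⊤ halfLineMeasure)
  · simp [hz, ENNReal.mul_top, ht]
  refine (iInf_le _ (eLpNorm z ⊤ halfLineMeasure).toNNReal).trans (add_le_add ?_ ?_)
  · rw [eLpNorm_one_eq_lintegral_enorm]
    refine lintegral_mono_ae ((ae_abs_le_toReal_eLpNorm_top hz.ne).mono fun s hs => ?_)
    rw [Real.enorm_eq_ofReal_abs]
    refine ENNReal.ofReal_le_ofReal ?_
    have htriangle := abs_add_le (y s) (z s)
    rw [hw, Pi.add_apply]
    simp only [ENNReal.coe_toNNReal_eq_toReal]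
    linarith
  · rw [ENNReal.coe_toNNReal hz.ne]

theorem K1inf_eq_iInf_lintegral_sub_add {t : ℝ} (ht : 0 < t) (w : ℝ → ℝ) :
    K1inf t w
      = ⨅ m : ℝ≥0, (∫⁻ s, ENNReal.ofReal (|w s| - m) ∂halfLineMeasure + ENNReal.ofReal t * m) :=
  le_antisymm (le_iInf (K1inf_le_lintegral_sub_add t w)) (iInf_lintegral_sub_add_le_K1inf ht w)

theorem ENNReal.ofReal_sub_coe_nnreal (a : ℝ) (m : ℝ≥0) :
    ENNReal.ofReal (a - m) = ENNReal.ofReal a - m := by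
  rw [ENNReal.ofReal_sub _ m.coe_nonneg, ENNReal.ofReal_coe_nnreal]

theorem halfLineMeasure_restrict_Iic (t : ℝ) :
    halfLineMeasure.restrict (Iic t) = volume.restrict (Ioc 0 t) := by
  rw [halfLineMeasure, Measure.restrict_restrict measurableSet_Iic, Iic_inter_Ioi]

theorem setLIntegral_Ioc_le_lintegral_halfLineMeasure (t : ℝ) (g : ℝ → ℝ≥0∞) :
    ∫⁻ s in Ioc 0 t, g s ≤ ∫⁻ s, g s ∂halfLineMeasure := by
  rw [← halfLineMeasure_restrict_Iic]
  exact setLIntegral_le_lintegral _ _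

theorem lintegral_halfLineMeasure_eq_setLIntegral_Ioc {t : ℝ} {g : ℝ → ℝ≥0∞}
    (hg : ∀ s, t < s → g s = 0) :
    ∫⁻ s, g s ∂halfLineMeasure = ∫⁻ s in Ioc 0 t, g s := by
  rw [← halfLineMeasure_restrict_Iic, ← lintegral_indicator measurableSet_Iic]
  refine lintegral_congr fun s => ?_
  by_cases hs : s ≤ t
  · rw [indicator_of_mem (mem_Iic.2 hs)]
  · rw [indicator_of_notMem (mt mem_Iic.1 hs), hg s (not_le.1 hs)]

theorem iInf_lintegral_sub_add_eq_of_antitoneOn {f : ℝ → ℝ} (hf : AntitoneOn f (Ioi 0)) {t : ℝ}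
    (ht : 0 < t) :
    ⨅ m : ℝ≥0, (∫⁻ s, ENNReal.ofReal (f s - m) ∂halfLineMeasure + ENNReal.ofReal t * m)
      = ∫⁻ s in Ioc 0 t, ENNReal.ofReal (f s) := by
  have hvol (m : ℝ≥0) : ENNReal.ofReal t * m = ∫⁻ _ in Ioc 0 t, (m : ℝ≥0∞) := by
    rw [setLIntegral_const, Real.volume_Ioc, sub_zero, mul_comm]
  simp_rw [ENNReal.ofReal_sub_coe_nnreal, hvol]
  refine le_antisymm ((iInf_le _ (f t).toNNReal).trans (le_of_eq ?_)) (le_iInf fun m => ?_)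
  · have hft : ((f t).toNNReal : ℝ≥0∞) = ENNReal.ofReal (f t) := rfl
    rw [hft, lintegral_halfLineMeasure_eq_setLIntegral_Ioc fun s hs =>
      tsub_eq_zero_of_le (ENNReal.ofReal_le_ofReal (hf ht (ht.trans hs) hs.le)),
      ← lintegral_add_right _ measurable_const]
    refine setLIntegral_congr_fun measurableSet_Ioc fun s hs => ?_
    exact tsub_add_cancel_of_le (ENNReal.ofReal_le_ofReal (hf hs.1 ht hs.2))
  · calc ∫⁻ s in Ioc 0 t, ENNReal.ofReal (f s)
        ≤ ∫⁻ s in Ioc 0 t, (ENNReal.ofReal (f s) - m + m) :=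
          lintegral_mono fun s => le_tsub_add
      _ = (∫⁻ s in Ioc 0 t, (ENNReal.ofReal (f s) - m)) + ∫⁻ _ in Ioc 0 t, (m : ℝ≥0∞) := by
          rw [lintegral_add_right _ measurable_const]
      _ ≤ _ := add_le_add (setLIntegral_Ioc_le_lintegral_halfLineMeasure _ _) le_rfl

theorem K1inf_eq_setLIntegral_of_antitoneOn {f : ℝ → ℝ} (hf : AntitoneOn f (Ioi 0))
    (hf0 : ∀ s, 0 ≤ f s) {t : ℝ} (ht : 0 < t) :
    K1inf t f = ∫⁻ s in Ioc 0 t, ENNReal.ofReal (f s) := by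
  simp_rw [K1inf_eq_iInf_lintegral_sub_add ht, abs_of_nonneg (hf0 _)]
  exact iInf_lintegral_sub_add_eq_of_antitoneOn hf ht

noncomputable def distribution (f : ℝ → ℝ) (τ : ℝ) : ℝ≥0∞ := halfLineMeasure {t | τ < |f t|}

theorem distribution_antitone (f : ℝ → ℝ) : Antitone (distribution f) :=
  fun _ _ hab => measure_mono fun _ ht => lt_of_le_of_lt hab ht

theorem distribution_le_of_forall_lt {f : ℝ → ℝ} {τ : ℝ} {c : ℝ≥0∞}
    (h : ∀ τ' > τ, distribution f τ' ≤ c) : distribution f τ ≤ c := by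
  have hunion : {t | τ < |f t|} = ⋃ k : ℕ, {t | τ + 1 / (k + 1) < |f t|} := by
    ext t
    simp only [mem_ofPred_eq, mem_iUnion]
    refine ⟨fun ht => ?_, fun ⟨k, hk⟩ =>
      lt_trans (lt_add_of_pos_right τ Nat.one_div_pos_of_nat) hk⟩
    obtain ⟨k, hk⟩ := exists_nat_one_div_lt (sub_pos.2 ht)
    exact ⟨k, by linarith⟩
  have hmono : Monotone fun k : ℕ => {t | τ + 1 / (k + 1) < |f t|} := fun a b hab t ht => by
    simp only [mem_ofPred_eq] at ht ⊢
    linarith [Nat.one_div_le_one_div (α := ℝ) hab]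
  rw [distribution, hunion, hmono.measure_iUnion]
  exact iSup_le fun k => h _ (lt_add_of_pos_right τ Nat.one_div_pos_of_nat)

theorem halfLineMeasure_apply (A : Set ℝ) : halfLineMeasure A = volume (A ∩ Ioi 0) :=
  Measure.restrict_apply' measurableSet_Ioi

theorem halfLineMeasure_setOf_ofReal_lt (c : ℝ≥0∞) :
    halfLineMeasure {s | ENNReal.ofReal s < c} = c := by
  rw [halfLineMeasure_apply]
  obtain rfl | hc := eq_top_or_lt_top c
  · simp [Real.volume_Ioi]
  have hset : {s | ENNReal.ofReal s < c} ∩ Ioi 0 = Ioo 0 c.toReal := by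
    ext s
    rw [mem_inter_iff, and_comm]
    exact and_congr_right fun hs => ENNReal.ofReal_lt_iff_lt_toReal (le_of_lt hs) hc.ne
  rw [hset, Real.volume_Ioo, sub_zero, ENNReal.ofReal_toReal hc.ne]

theorem lintegral_ofReal_abs_sub_eq_lintegral_distribution {f : ℝ → ℝ}
    (hf : AEMeasurable f halfLineMeasure) (m : ℝ≥0) :
    ∫⁻ s, ENNReal.ofReal (|f s| - m) ∂halfLineMeasure
      = ∫⁻ τ in Ioi 0, distribution f (m + τ) := by
  have hpos (s : ℝ) : ENNReal.ofReal (|f s| - m) = ENNReal.ofReal (max (|f s| - m) 0) := by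
    rw [ENNReal.ofReal_max, ENNReal.ofReal_zero, max_eq_left zero_le]
  simp_rw [hpos]
  rw [lintegral_eq_lintegral_meas_lt (f := fun s => max (|f s| - m) 0) _
    (ae_of_all _ fun _ => le_max_right _ _) ((hf.abs.sub_const _).max aemeasurable_const)]
  refine setLIntegral_congr_fun measurableSet_Ioi fun τ hτ => ?_
  simp only [distribution, lt_max_iff, lt_sub_iff_add_lt',
    or_iff_left (not_lt.2 (le_of_lt (mem_Ioi.1 hτ)))]

theorem K1inf_eq_of_distribution_eq {f g : ℝ → ℝ} (hf : AEMeasurable f halfLineMeasure)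
    (hg : AEMeasurable g halfLineMeasure)
    (hfg : ∀ τ, 0 ≤ τ → distribution f τ = distribution g τ) {t : ℝ} (ht : 0 < t) :
    K1inf t f = K1inf t g := by
  simp only [K1inf_eq_iInf_lintegral_sub_add ht,
    lintegral_ofReal_abs_sub_eq_lintegral_distribution hf,
    lintegral_ofReal_abs_sub_eq_lintegral_distribution hg]
  refine iInf_congr fun m => congrArg (· + _) ?_
  exact setLIntegral_congr_fun measurableSet_Ioi fun τ hτ =>
    hfg _ (add_nonneg m.coe_nonneg (le_of_lt hτ))

section decRearr

variable {x : ℝ → ℝ}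

theorem decRearr_nonneg (x : ℝ → ℝ) (s : ℝ) : 0 ≤ decRearr x s :=
  Real.sInf_nonneg fun _ h => h.1

theorem decRearr_le_iff (hx : ∀ s > 0, ∃ τ, 0 ≤ τ ∧ distribution x τ ≤ ENNReal.ofReal s)
    {s τ : ℝ} (hs : 0 < s) (hτ : 0 ≤ τ) :
    decRearr x s ≤ τ ↔ distribution x τ ≤ ENNReal.ofReal s := by
  have hbdd : BddBelow {τ : ℝ | 0 ≤ τ ∧ distribution x τ ≤ ENNReal.ofReal s} :=
    ⟨0, fun _ h => h.1⟩
  refine ⟨fun h => distribution_le_of_forall_lt fun τ' hτ' => ?_, fun h => csInf_le hbdd ⟨hτ, h⟩⟩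
  obtain ⟨τ'', ⟨-, hτ''⟩, hlt⟩ := (csInf_lt_iff hbdd (hx s hs)).1 (h.trans_lt hτ')
  exact (distribution_antitone x hlt.le).trans hτ''

theorem decRearr_antitoneOn (hx : ∀ s > 0, ∃ τ, 0 ≤ τ ∧ distribution x τ ≤ ENNReal.ofReal s) :
    AntitoneOn (decRearr x) (Ioi 0) := fun s hs _ _ hss' =>
  (decRearr_le_iff hx (lt_of_lt_of_le hs hss') (decRearr_nonneg x s)).2 <|
    ((decRearr_le_iff hx hs (decRearr_nonneg x s)).1 le_rfl).trans (ENNReal.ofReal_le_ofReal hss')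

theorem distribution_decRearr
    (hx : ∀ s > 0, ∃ τ, 0 ≤ τ ∧ distribution x τ ≤ ENNReal.ofReal s) {τ : ℝ} (hτ : 0 ≤ τ) :
    distribution (decRearr x) τ = distribution x τ := by
  calc distribution (decRearr x) τ
      = halfLineMeasure {s | ENNReal.ofReal s < distribution x τ} := by
        rw [distribution, halfLineMeasure_apply, halfLineMeasure_apply]
        congr 1
        ext s
        simp only [mem_inter_iff, mem_ofPred_eq, mem_Ioi, abs_of_nonneg (decRearr_nonneg x s)]
        refine and_congr_left fun hs => ?_
        rw [← not_le, decRearr_le_iff hx hs hτ, not_le]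
    _ = distribution x τ := halfLineMeasure_setOf_ofReal_lt _

theorem K1inf_decRearr (hxm : AEMeasurable x halfLineMeasure)
    (hx : ∀ s > 0, ∃ τ, 0 ≤ τ ∧ distribution x τ ≤ ENNReal.ofReal s) {t : ℝ} (ht : 0 < t) :
    K1inf t (decRearr x) = K1inf t x :=
  K1inf_eq_of_distribution_eq (aemeasurable_restrict_of_antitoneOn measurableSet_Ioi
    (decRearr_antitoneOn hx)) hxm (fun _ => distribution_decRearr hx) ht

end decRearr

section Q

variable {f : ℝ → ℝ}

theorem Q_eq_of_mem_Ioc (f : ℝ → ℝ) {k : ℕ} {t : ℝ} (ht : t ∈ Ioc (k : ℝ) (k + 1)) :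
    Q f t = ∫ s in (k : ℝ)..(k + 1), f s := by
  rw [Q, tsum_eq_single k, indicator_of_mem ht]
  refine fun j hj => indicator_of_notMem (fun htj => hj ?_) _
  have h1 : (k : ℝ) < j + 1 := ht.1.trans_le htj.2
  have h2 : (j : ℝ) < k + 1 := htj.1.trans_le ht.2
  norm_cast at h1 h2
  omega

theorem Q_nonneg (hf0 : ∀ s, 0 ≤ f s) (t : ℝ) : 0 ≤ Q f t :=
  tsum_nonneg fun _ => indicator_nonneg
    (fun _ _ => intervalIntegral.integral_nonneg (by linarith) fun s _ => hf0 s) _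

theorem mem_Ioc_natCeil_sub_one {t : ℝ} (ht : 0 < t) :
    t ∈ Ioc ((⌈t⌉₊ - 1 : ℕ) : ℝ) ((⌈t⌉₊ - 1 : ℕ) + 1) := by
  rw [Nat.cast_sub (Nat.one_le_iff_ne_zero.2 (Nat.ceil_pos.2 ht).ne'), Nat.cast_one,
    sub_add_cancel]
  exact ⟨by linarith [Nat.ceil_lt_add_one ht.le], Nat.le_ceil t⟩

theorem antitone_intervalIntegral_Ioc_succ (hf : AntitoneOn f (Ioi 0))
    (hint : ∀ k : ℕ, IntervalIntegrable f volume k (k + 1)) :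
    Antitone fun k : ℕ => ∫ s in (k : ℝ)..(k + 1), f s := by
  refine antitone_nat_of_succ_le fun k => ?_
  have hshift := intervalIntegral.integral_comp_add_right f (a := (k : ℝ)) (b := k + 1) 1
  have hint' := (hint (k + 1)).comp_add_right 1
  push_cast at hshift hint' ⊢
  rw [← hshift]
  simp only [add_sub_cancel_right] at hint'
  refine intervalIntegral.integral_mono_on_of_le_Ioo (by linarith) hint' (hint k) fun s hs => ?_
  have hs0 : 0 < s := lt_of_le_of_lt (Nat.cast_nonneg k) hs.1
  exact hf hs0 (by simp only [mem_Ioi]; linarith) (by linarith)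

theorem Q_antitoneOn (hf : AntitoneOn f (Ioi 0))
    (hint : ∀ k : ℕ, IntervalIntegrable f volume k (k + 1)) : AntitoneOn (Q f) (Ioi 0) := by
  intro s hs t ht hst
  rw [Q_eq_of_mem_Ioc f (mem_Ioc_natCeil_sub_one hs),
    Q_eq_of_mem_Ioc f (mem_Ioc_natCeil_sub_one ht)]
  exact antitone_intervalIntegral_Ioc_succ hf hint (Nat.sub_le_sub_right (Nat.ceil_mono hst) 1)

theorem setLIntegral_Ioc_natCast_eq_sum (g : ℝ → ℝ≥0∞) (n : ℕ) :
    ∫⁻ s in Ioc 0 (n : ℝ), g s = ∑ k ∈ Finset.range n, ∫⁻ s in Ioc (k : ℝ) (k + 1), g s := by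
  induction n with
  | zero => simp
  | succ n ih =>
    rw [Finset.sum_range_succ, ← ih, Nat.cast_succ,
      ← Ioc_union_Ioc_eq_Ioc (Nat.cast_nonneg n) (by linarith),
      lintegral_union measurableSet_Ioc (Ioc_disjoint_Ioc_of_le le_rfl)]

theorem setLIntegral_ofReal_Q (hf0 : ∀ s, 0 ≤ f s)
    (hint : ∀ k : ℕ, IntervalIntegrable f volume k (k + 1)) (n : ℕ) :
    ∫⁻ s in Ioc 0 (n : ℝ), ENNReal.ofReal (Q f s)
      = ∫⁻ s in Ioc 0 (n : ℝ), ENNReal.ofReal (f s) := by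
  rw [setLIntegral_Ioc_natCast_eq_sum, setLIntegral_Ioc_natCast_eq_sum]
  refine Finset.sum_congr rfl fun k _ => ?_
  rw [setLIntegral_congr_fun measurableSet_Ioc fun t ht => by rw [Q_eq_of_mem_Ioc f ht],
    setLIntegral_const, Real.volume_Ioc, add_sub_cancel_left, ENNReal.ofReal_one, mul_one,
    intervalIntegral.integral_of_le (by linarith),
    ofReal_integral_eq_lintegral_ofReal (hint k).1 (ae_of_all _ fun s => hf0 s)]

end Q

section MemLpAdd

variable {x : ℝ → ℝ}

theorem exists_distribution_le_of_memLp_add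
    (hmem : ∃ y z : ℝ → ℝ, x = y + z ∧ MemLp y 1 halfLineMeasure ∧ MemLp z ⊤ halfLineMeasure) :
    ∀ s > 0, ∃ τ, 0 ≤ τ ∧ distribution x τ ≤ ENNReal.ofReal s := by
  obtain ⟨y, z, rfl, hy, hz⟩ := hmem
  intro s hs
  set C := eLpNorm y 1 halfLineMeasure with hC
  set B := (eLpNorm z ⊤ halfLineMeasure).toReal
  set r := C.toReal / s + 1
  have hr : 0 < r := by positivity
  have hCr : C.toReal ≤ s * r := by
    rw [mul_add, mul_div_cancel₀ _ hs.ne', mul_one]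
    linarith
  refine ⟨B + r, by positivity, ?_⟩
  calc distribution (y + z) (B + r) ≤ halfLineMeasure {t | ENNReal.ofReal r ≤ ‖y t‖ₑ} := by
        refine measure_mono_ae ((ae_abs_le_toReal_eLpNorm_top hz.eLpNorm_lt_top.ne).mono
          fun t ht hlt => ?_)
        have hlt : B + r < |y t + z t| := hlt
        change ENNReal.ofReal r ≤ ‖y t‖ₑ
        rw [Real.enorm_eq_ofReal_abs]
        exact ENNReal.ofReal_le_ofReal (by linarith [abs_add_le (y t) (z t)])
    _ ≤ C / ENNReal.ofReal r := by
        rw [hC, eLpNorm_one_eq_lintegral_enorm]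
        exact meas_ge_le_lintegral_div hy.1.enorm (ENNReal.ofReal_pos.2 hr).ne'
          ENNReal.ofReal_ne_top
    _ ≤ ENNReal.ofReal s := by
        refine ENNReal.div_le_of_le_mul ?_
        rw [← ENNReal.ofReal_mul hs.le,
          ENNReal.le_ofReal_iff_toReal_le hy.eLpNorm_lt_top.ne (by positivity)]
        exact hCr

theorem K1inf_lt_top
    (hmem : ∃ y z : ℝ → ℝ, x = y + z ∧ MemLp y 1 halfLineMeasure ∧ MemLp z ⊤ halfLineMeasure)
    (t : ℝ) : K1inf t x < ⊤ := by
  obtain ⟨y, z, hx, hy, hz⟩ := hmem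
  exact (K1inf_le_of_eq_add t y z hx).trans_lt (ENNReal.add_lt_top.2
    ⟨hy.eLpNorm_lt_top, ENNReal.mul_lt_top ENNReal.ofReal_lt_top hz.eLpNorm_lt_top⟩)

theorem intervalIntegrable_decRearr (hxm : AEMeasurable x halfLineMeasure)
    (hmem : ∃ y z : ℝ → ℝ, x = y + z ∧ MemLp y 1 halfLineMeasure ∧ MemLp z ⊤ halfLineMeasure)
    (k : ℕ) : IntervalIntegrable (decRearr x) volume k (k + 1) := by
  have hx := exists_distribution_le_of_memLp_add hmem
  have hanti := decRearr_antitoneOn hx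
  have hk : (0 : ℝ) < k + 1 := by positivity
  have hfin : ∫⁻ s in Ioc 0 ((k : ℝ) + 1), ENNReal.ofReal (decRearr x s) < ⊤ := by
    rw [← K1inf_eq_setLIntegral_of_antitoneOn hanti (decRearr_nonneg x) hk,
      K1inf_decRearr hxm hx hk]
    exact K1inf_lt_top hmem _
  have hint : IntegrableOn (decRearr x) (Ioc 0 ((k : ℝ) + 1)) :=
    ⟨(aemeasurable_restrict_of_antitoneOn measurableSet_Ioc
      (hanti.mono Ioc_subset_Ioi_self)).aestronglyMeasurable,
      (hasFiniteIntegral_iff_ofReal (ae_of_all _ (decRearr_nonneg x))).2 hfin⟩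
  exact (intervalIntegrable_iff_integrableOn_Ioc_of_le (by linarith)).2
    (hint.mono_set (Ioc_subset_Ioc_left (Nat.cast_nonneg k)))

end MemLpAdd

/-- For every `x ∈ L¹ + L^∞` and every positive integer `t`,
`K(t, Q(x*); L¹, L^∞) = K(t, x; L¹, L^∞)`. -/
theorem K1inf_Q_rearrangement (x : ℝ → ℝ) (hx : Measurable x)
    (hmem : ∃ y z : ℝ → ℝ, x = y + z ∧ MemLp y 1 halfLineMeasure ∧
      MemLp z ⊤ halfLineMeasure)
    (n : ℕ) (hn : 0 < n) :
    K1inf (n : ℝ) (Q (decRearr x)) = K1inf (n : ℝ) x := by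
  have hn' : (0 : ℝ) < n := Nat.cast_pos.2 hn
  have hdist := exists_distribution_le_of_memLp_add hmem
  have hanti := decRearr_antitoneOn hdist
  have hint := intervalIntegrable_decRearr hx.aemeasurable hmem
  rw [K1inf_eq_setLIntegral_of_antitoneOn (Q_antitoneOn hanti hint)
      (Q_nonneg (decRearr_nonneg x)) hn',
    setLIntegral_ofReal_Q (decRearr_nonneg x) hint,
    ← K1inf_eq_setLIntegral_of_antitoneOn hanti (decRearr_nonneg x) hn',
    K1inf_decRearr hx.aemeasurable hdist hn']
end

section
/- Let f, g be nonnegative concave nondecreasing functions on (0,∞) that agree at every positive integer. Then f(t) ≤ 2 g(t) and g(t) ≤ 2 f(t) for all t ≥ 1. -/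
open Filter Topology Set

lemma aux_two (f : ℝ → ℝ) (hf0 : ∀ t ∈ Set.Ioi (0:ℝ), 0 ≤ f t)
    (hfc : ConcaveOn ℝ (Set.Ioi 0) f) : f 2 ≤ 2 * f 1 := by
  have key : ∀ ε ∈ Set.Ioo (0:ℝ) 1, (1-ε)/(2-ε) * f 2 ≤ f 1 := by
    intro ε hε
    obtain ⟨hε0, hε1⟩ := hε
    have h2ε : (0:ℝ) < 2 - ε := by linarith
    set a : ℝ := (1-ε)/(2-ε) with ha_def
    have ha : 0 ≤ a := div_nonneg (by linarith) h2ε.le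
    have hb : 0 ≤ 1 - a := by
      rw [sub_nonneg, ha_def, div_le_one h2ε]; linarith
    have hab : a + (1 - a) = 1 := by ring
    have hcomb : a • (2:ℝ) + (1-a) • ε = 1 := by
      rw [smul_eq_mul, smul_eq_mul, ha_def]
      field_simp
      ring
    have := hfc.2 (by norm_num : (2:ℝ) ∈ Set.Ioi 0)
      (by exact hε0 : ε ∈ Set.Ioi 0) ha hb hab
    rw [hcomb] at this
    have hfε : 0 ≤ f ε := hf0 ε hε0
    have : a * f 2 + (1-a) * f ε ≤ f 1 := this
    nlinarith
  have htend : Tendsto (fun ε : ℝ => (1-ε)/(2-ε) * f 2) (𝓝[>] 0)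
      (𝓝 ((1-0)/(2-0) * f 2)) := by
    apply Tendsto.mono_left _ nhdsWithin_le_nhds
    apply ContinuousAt.tendsto
    exact (((continuous_const.sub continuous_id).continuousAt).div
      ((continuous_const.sub continuous_id).continuousAt) (by norm_num)).mul
      continuousAt_const
  have hev : ∀ᶠ ε in 𝓝[>] (0:ℝ), (1-ε)/(2-ε) * f 2 ≤ f 1 := by
    filter_upwards [Ioo_mem_nhdsGT_of_mem (by norm_num : (0:ℝ) ∈ Set.Ico 0 1)] with ε hε
    exact key ε hε
  have := le_of_tendsto htend hev
  norm_num at this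
  linarith

lemma aux_step (f : ℝ → ℝ) (hf0 : ∀ t ∈ Set.Ioi (0:ℝ), 0 ≤ f t)
    (hfc : ConcaveOn ℝ (Set.Ioi 0) f) (n : ℕ) (hn : 1 ≤ n) :
    f ((n:ℝ)+1) ≤ 2 * f n := by
  rcases eq_or_lt_of_le hn with h1 | h2
  · have : (n:ℝ) = 1 := by exact_mod_cast h1.symm
    rw [this]
    norm_num
    exact aux_two f hf0 hfc
  · -- n ≥ 2 : midpoint
    have hn2 : (2:ℝ) ≤ n := by exact_mod_cast h2
    have hm1 : ((n:ℝ) - 1) ∈ Set.Ioi (0:ℝ) := by simp; linarith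
    have hp1 : ((n:ℝ) + 1) ∈ Set.Ioi (0:ℝ) := by simp; positivity
    have := hfc.2 hm1 hp1 (by norm_num : (0:ℝ) ≤ 1/2) (by norm_num : (0:ℝ) ≤ 1/2)
      (by norm_num)
    have hcomb : (1/2 : ℝ) • ((n:ℝ)-1) + (1/2 : ℝ) • ((n:ℝ)+1) = n := by
      simp [smul_eq_mul]; ring
    rw [hcomb] at this
    have h0 : 0 ≤ f ((n:ℝ)-1) := hf0 _ hm1
    have : 1/2 * f ((n:ℝ)-1) + 1/2 * f ((n:ℝ)+1) ≤ f n := this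
    linarith

lemma aux_floor (f : ℝ → ℝ) (hf0 : ∀ t ∈ Set.Ioi (0:ℝ), 0 ≤ f t)
    (hfc : ConcaveOn ℝ (Set.Ioi 0) f) (hfm : MonotoneOn f (Set.Ioi 0))
    (t : ℝ) (ht : 1 ≤ t) : f t ≤ 2 * f (⌊t⌋₊ : ℝ) := by
  set n := ⌊t⌋₊ with hn
  have hn1 : 1 ≤ n := (Nat.one_le_floor_iff t).mpr ht
  have hnt : (n:ℝ) ≤ t := Nat.floor_le (by linarith)
  have htn : t < (n:ℝ) + 1 := by exact_mod_cast Nat.lt_floor_add_one t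
  have hnpos : (0:ℝ) < n := by exact_mod_cast hn1
  have ht0 : t ∈ Set.Ioi (0:ℝ) := by simp; linarith
  have h1 : f t ≤ f ((n:ℝ)+1) :=
    hfm ht0 (by simp; positivity) htn.le
  have h2 := aux_step f hf0 hfc n hn1
  linarith

/-- If `f, g` are nonnegative, concave, nondecreasing functions on `(0,∞)` agreeing at
every positive integer, then `f(t) ≤ 2 g(t)` and `g(t) ≤ 2 f(t)` for all `t ≥ 1`. -/
theorem concave_agree_on_integers (f g : ℝ → ℝ)
    (hf0 : ∀ t ∈ Set.Ioi (0:ℝ), 0 ≤ f t) (hg0 : ∀ t ∈ Set.Ioi (0:ℝ), 0 ≤ g t)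
    (hfc : ConcaveOn ℝ (Set.Ioi 0) f) (hgc : ConcaveOn ℝ (Set.Ioi 0) g)
    (hfm : MonotoneOn f (Set.Ioi 0)) (hgm : MonotoneOn g (Set.Ioi 0))
    (hagree : ∀ n : ℕ, 1 ≤ n → f (n : ℝ) = g (n : ℝ)) :
    ∀ t : ℝ, 1 ≤ t → f t ≤ 2 * g t ∧ g t ≤ 2 * f t := by
  intro t ht
  set n := ⌊t⌋₊ with hn
  have hn1 : 1 ≤ n := (Nat.one_le_floor_iff t).mpr ht
  have hnt : (n:ℝ) ≤ t := Nat.floor_le (by linarith)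
  have hnpos : (0:ℝ) < n := by exact_mod_cast hn1
  have ht0 : t ∈ Set.Ioi (0:ℝ) := by simp; linarith
  have hn0 : (n:ℝ) ∈ Set.Ioi (0:ℝ) := hnpos
  constructor
  · have h1 := aux_floor f hf0 hfc hfm t ht
    have h2 : g (n:ℝ) ≤ g t := hgm hn0 ht0 hnt
    rw [hagree n hn1] at h1
    linarith
  · have h1 := aux_floor g hg0 hgc hgm t ht
    have h2 : f (n:ℝ) ≤ f t := hfm hn0 ht0 hnt
    rw [← hagree n hn1] at h1
    linarith
end

section
/- Let a = (a_k) be a nonincreasing nonnegative sequence with sup_{k≥0} (k+1)^{-1} Σ_{i=1}^{2^{2k}} a_i ≤ 2R (i.e. ‖a‖_{l^1(log)} ≤ R). Then a_{2^{2k}} ≤ 2^{1−2k} R (k+1) for all k ≥ 0, and Σ_{i=2^{2k}+1}^∞ a_i² ≤ 144 R² (k+1)² 2^{−2k}. -/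
/-!
Monotonicity turns the bound on the first `4^k` terms into the pointwise bound
`a (4^k) ≤ 2R(k+1)/4^k`. The dyadic block `(4^m, 4^(m+1)]` has `3·4^m` terms, each of square at
most `a (4^m)^2`, so it contributes at most `12R²(m+1)²/4^m`. Summing the blocks with `m = k + n`,
using `k+n+1 ≤ (k+1)(n+1)` and `∑ (n+1)²/4^n ≤ 3`, bounds the tail by `36R²(k+1)²/4^k`.
-/

open Finset Filter

theorem Finset.sum_Ioc_eq_sum_range_sum_Ioc {M : Type*} [AddCommMonoid M] (f : ℕ → M)
    {N : ℕ → ℕ} (hN : Monotone N) (t : ℕ) :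
    ∑ i ∈ Ioc (N 0) (N t), f i = ∑ n ∈ range t, ∑ i ∈ Ioc (N n) (N (n + 1)), f i := by
  induction t with
  | zero => simp
  | succ t ih =>
    rw [sum_range_succ, ← ih, sum_Ioc_consecutive f (hN t.zero_le) (hN t.le_succ)]

theorem tsum_nat_add_le_of_sum_Ioc_le {f : ℕ → ℝ} (hf : ∀ i, 0 ≤ f i) (m : ℕ) {N : ℕ → ℕ}
    (hN : Tendsto N atTop atTop) {C : ℝ} (h : ∀ t, ∑ i ∈ Ioc m (N t), f i ≤ C) :
    ∑' j, f (m + 1 + j) ≤ C := by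
  refine Real.tsum_le_of_sum_range_le (fun j => hf _) fun n => ?_
  obtain ⟨t, ht⟩ := (hN.eventually_ge_atTop (m + n)).exists
  have hshift : ∑ j ∈ range n, f (m + 1 + j) = ∑ i ∈ Ioc m (m + n), f i := by
    rw [← Icc_add_one_left_eq_Ioc, ← Ico_add_one_right_eq_Icc, sum_Ico_eq_sum_range]
    simp [add_right_comm]
  calc ∑ j ∈ range n, f (m + 1 + j) = ∑ i ∈ Ioc m (m + n), f i := hshift
    _ ≤ ∑ i ∈ Ioc m (N t), f i :=
      sum_le_sum_of_subset_of_nonneg (Ioc_subset_Ioc_right ht) fun i _ _ => hf i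
    _ ≤ C := h t

theorem sum_range_sq_div_four_pow_le (t : ℕ) :
    ∑ n ∈ range t, ((n : ℝ) + 1) ^ 2 / 4 ^ n ≤ 3 := by
  have closed_form : ∀ t : ℕ, ∑ n ∈ range t, ((n : ℝ) + 1) ^ 2 / 4 ^ n
      + (4 / 3 * ((t : ℝ) + 1) ^ 2 + 8 / 9 * ((t : ℝ) + 1) + 20 / 27) / 4 ^ t = 80 / 27 := by
    intro t
    induction t with
    | zero => norm_num
    | succ t ih =>
      rw [sum_range_succ, ← ih]
      push_cast
      field_simp
      ring
  have hrem : 0 ≤ (4 / 3 * ((t : ℝ) + 1) ^ 2 + 8 / 9 * ((t : ℝ) + 1) + 20 / 27) / 4 ^ t := by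
    positivity
  linarith [closed_form t]

namespace AntitoneOn

variable {a : ℕ → ℝ}

theorem le_div_of_sum_Icc_le (hanti : AntitoneOn a (Set.Ici 1)) {n : ℕ} (hn : 0 < n) {C : ℝ}
    (h : ∑ i ∈ Icc 1 n, a i ≤ C) : a n ≤ C / n := by
  rw [le_div_iff₀' (by exact_mod_cast hn)]
  have hle : ∀ i ∈ Icc 1 n, a n ≤ a i := fun i hi =>
    hanti (mem_Icc.1 hi).1 (Set.mem_Ici.2 hn) (mem_Icc.1 hi).2
  simpa using (card_nsmul_le_sum _ _ _ hle).trans h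

theorem sum_Ioc_sq_le (hanti : AntitoneOn a (Set.Ici 1)) (hnonneg : ∀ i, 0 ≤ a i) {m : ℕ}
    (hm : 1 ≤ m) (n : ℕ) : ∑ i ∈ Ioc m n, a i ^ 2 ≤ (n - m : ℕ) * a m ^ 2 := by
  have hle : ∀ i ∈ Ioc m n, a i ^ 2 ≤ a m ^ 2 := fun i hi =>
    pow_le_pow_left₀ (hnonneg i) (hanti hm (hm.trans (mem_Ioc.1 hi).1.le) (mem_Ioc.1 hi).1.le) 2
  simpa using sum_le_card_nsmul _ _ _ hle

theorem sum_Ioc_four_pow_sq_le (hanti : AntitoneOn a (Set.Ici 1)) (hnonneg : ∀ i, 0 ≤ a i)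
    {c : ℝ} {m : ℕ} (hm : a (4 ^ m) ≤ c * (m + 1) / 4 ^ m) :
    ∑ i ∈ Ioc (4 ^ m) (4 ^ (m + 1)), a i ^ 2 ≤ 3 * c ^ 2 * (m + 1) ^ 2 / 4 ^ m := by
  have hlen : ((4 ^ (m + 1) - 4 ^ m : ℕ) : ℝ) = 3 * 4 ^ m := by
    rw [pow_succ, show 4 ^ m * 4 - 4 ^ m = 3 * 4 ^ m by omega]
    push_cast
    ring
  calc ∑ i ∈ Ioc (4 ^ m) (4 ^ (m + 1)), a i ^ 2 ≤ 3 * 4 ^ m * a (4 ^ m) ^ 2 := by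
        simpa only [hlen] using
          hanti.sum_Ioc_sq_le hnonneg (Nat.one_le_pow m 4 four_pos) (4 ^ (m + 1))
    _ ≤ 3 * 4 ^ m * (c * (m + 1) / 4 ^ m) ^ 2 := by
        gcongr
        exact hnonneg _
    _ = 3 * c ^ 2 * (m + 1) ^ 2 / 4 ^ m := by
        field_simp

theorem sum_Ioc_four_pow_sq_le_of_forall (hanti : AntitoneOn a (Set.Ici 1))
    (hnonneg : ∀ i, 0 ≤ a i) {c : ℝ} (hpoint : ∀ m : ℕ, a (4 ^ m) ≤ c * (m + 1) / 4 ^ m)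
    (k t : ℕ) : ∑ i ∈ Ioc (4 ^ k) (4 ^ (k + t)), a i ^ 2 ≤ 9 * c ^ 2 * (k + 1) ^ 2 / 4 ^ k := by
  have hmono : Monotone fun n => 4 ^ (k + n) := fun n n' h =>
    Nat.pow_le_pow_right (by norm_num) (by omega)
  have hsplit (n : ℕ) : (((k + n : ℕ) : ℝ) + 1) ^ 2 / 4 ^ (k + n)
      ≤ (k + 1) ^ 2 / 4 ^ k * ((n + 1) ^ 2 / 4 ^ n) := by
    rw [pow_add, div_mul_div_comm, ← mul_pow]
    gcongr
    push_cast
    nlinarith [mul_nonneg (k.cast_nonneg : (0 : ℝ) ≤ k) (n.cast_nonneg : (0 : ℝ) ≤ n)]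
  calc ∑ i ∈ Ioc (4 ^ k) (4 ^ (k + t)), a i ^ 2
      = ∑ n ∈ range t, ∑ i ∈ Ioc (4 ^ (k + n)) (4 ^ (k + n + 1)), a i ^ 2 :=
        sum_Ioc_eq_sum_range_sum_Ioc _ hmono t
    _ ≤ ∑ n ∈ range t, 3 * c ^ 2 * (((k + n : ℕ) : ℝ) + 1) ^ 2 / 4 ^ (k + n) :=
        sum_le_sum fun n _ => hanti.sum_Ioc_four_pow_sq_le hnonneg (hpoint (k + n))
    _ ≤ ∑ n ∈ range t, 3 * c ^ 2 * ((k + 1) ^ 2 / 4 ^ k * ((n + 1) ^ 2 / 4 ^ n)) := by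
        gcongr with n
        simpa only [mul_div_assoc] using mul_le_mul_of_nonneg_left (hsplit n) (by positivity)
    _ = 3 * c ^ 2 * ((k + 1) ^ 2 / 4 ^ k) * ∑ n ∈ range t, ((n : ℝ) + 1) ^ 2 / 4 ^ n := by
        rw [mul_sum]
        simp only [mul_assoc]
    _ ≤ 3 * c ^ 2 * ((k + 1) ^ 2 / 4 ^ k) * 3 := by
        gcongr
        exact sum_range_sq_div_four_pow_le t
    _ = 9 * c ^ 2 * (k + 1) ^ 2 / 4 ^ k := by ring

end AntitoneOn

theorem tail_square_sum_bound_general (a : ℕ → ℝ) (R : ℝ)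
    (hnonneg : ∀ i : ℕ, 0 ≤ a i)
    (hanti : ∀ i j : ℕ, 1 ≤ i → i ≤ j → a j ≤ a i)
    (hsum : ∀ k : ℕ, ∑ i ∈ Finset.Icc 1 (2 ^ (2 * k)), a i ≤ 2 * R * ((k : ℝ) + 1)) :
    ∀ k : ℕ,
      a (2 ^ (2 * k)) ≤ (2 : ℝ) ^ (1 - 2 * (k : ℤ)) * R * ((k : ℝ) + 1) ∧
      (∑' j : ℕ, (a (2 ^ (2 * k) + 1 + j)) ^ 2) ≤
        144 * R ^ 2 * ((k : ℝ) + 1) ^ 2 * (2 : ℝ) ^ (-(2 * (k : ℤ))) := by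
  have hanti' : AntitoneOn a (Set.Ici 1) := fun i hi j _ hij => hanti i j hi hij
  have hpow (m : ℕ) : 2 ^ (2 * m) = 4 ^ m := by rw [pow_mul]; norm_num
  have hpoint (m : ℕ) : a (4 ^ m) ≤ 2 * R * (m + 1) / 4 ^ m := by
    exact_mod_cast hanti'.le_div_of_sum_Icc_le (by positivity) (hpow m ▸ hsum m)
  intro k
  have hzpow : (2 : ℝ) ^ (2 * (k : ℤ)) = 4 ^ k := by rw [zpow_mul]; norm_num
  rw [hpow, zpow_sub₀ two_ne_zero, zpow_neg, hzpow, zpow_one]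
  refine ⟨(hpoint k).trans_eq (by ring), ?_⟩
  have hN : Tendsto (fun t => 4 ^ (k + t)) atTop atTop :=
    tendsto_atTop_mono (fun t => (Nat.le_add_left t k).trans (Nat.lt_pow_self (by norm_num)).le)
      tendsto_id
  calc ∑' j, a (4 ^ k + 1 + j) ^ 2 ≤ 9 * (2 * R) ^ 2 * (k + 1) ^ 2 / 4 ^ k :=
        tsum_nat_add_le_of_sum_Ioc_le (fun i => sq_nonneg (a i)) _ hN
          (hanti'.sum_Ioc_four_pow_sq_le_of_forall hnonneg hpoint k)
    _ = 36 * R ^ 2 * (k + 1) ^ 2 * (4 ^ k)⁻¹ := by ring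
    _ ≤ 144 * R ^ 2 * (k + 1) ^ 2 * (4 ^ k)⁻¹ := by gcongr; norm_num

/-- If `a` is a nonincreasing nonnegative sequence (indexed from 1) with
`∑_{i=1}^{2^{2k}} a_i ≤ 2R(k+1)` for all `k ≥ 0`, then `a_{2^{2k}} ≤ 2^{1-2k} R (k+1)`
and `∑_{i=2^{2k}+1}^∞ a_i² ≤ 144 R² (k+1)² 2^{-2k}`. -/
theorem tail_square_sum_bound (a : ℕ → ℝ) (R : ℝ) (hR : 0 < R)
    (hnonneg : ∀ i : ℕ, 0 ≤ a i)
    (hanti : ∀ i j : ℕ, 1 ≤ i → i ≤ j → a j ≤ a i)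
    (hsum : ∀ k : ℕ, ∑ i ∈ Finset.Icc 1 (2 ^ (2 * k)), a i ≤ 2 * R * ((k : ℝ) + 1)) :
    ∀ k : ℕ,
      a (2 ^ (2 * k)) ≤ (2 : ℝ) ^ (1 - 2 * (k : ℤ)) * R * ((k : ℝ) + 1) ∧
      (∑' j : ℕ, (a (2 ^ (2 * k) + 1 + j)) ^ 2) ≤
        144 * R ^ 2 * ((k : ℝ) + 1) ^ 2 * (2 : ℝ) ^ (-(2 * (k : ℤ))) :=
  tail_square_sum_bound_general a R hnonneg hanti hsum
end
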